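/- Let R and S be rings with local units and let U be a unitary R-S-bimodule. If the contravariant functor Hom_R(−,U)S : Rmod → modS is a duality with inverse duality RHom_S(−,U) : modS → Rmod, then R is a left locally noetherian ring and S is a right locally noetherian ring. -/

import Mathlib

set_option linter.unusedVariables false

/-! ### Core: non-unital rings with local units, modules, homomorphisms, categories -/

universe u v w

open MulOpposite CategoryTheory

/-- A ring with local units: every finite subset is contained in a subring
of the form `eRe` for an idempotent `e`; equivalently, every finite subset
admits an idempotent acting as a two-sided identity on it. -/
class HasLocalUnits (R : Type u) [NonUnitalRing R] : Prop where
  exists_unit : ∀ s : Finset R, ∃ e : R, e * e = e ∧ ∀ x ∈ s, e * x = x ∧ x * e = x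

/-- A (left) module over a non-unital ring. -/
class LMod (R : Type u) [NonUnitalRing R] (M : Type v) [AddCommGroup M] extends SMul R M where
  smul_add' : ∀ (r : R) (m n : M), r • (m + n) = r • m + r • n
  add_smul' : ∀ (r s : R) (m : M), (r + s) • m = r • m + s • m
  mul_smul' : ∀ (r s : R) (m : M), (r * s) • m = r • (s • m)

section basic
variable {R : Type u} [NonUnitalRing R] {M : Type v} [AddCommGroup M] [LMod R M]

theorem LMod.smul_zero' (r : R) : r • (0 : M) = 0 := by
  have h := LMod.smul_add' r (0 : M) 0
  rw [add_zero] at h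
  have h2 : r • (0 : M) + r • (0 : M) = r • (0 : M) + 0 := by rw [← h, add_zero]
  exact add_left_cancel h2

theorem LMod.zero_smul' (m : M) : (0 : R) • m = 0 := by
  have h := LMod.add_smul' (0 : R) 0 m
  rw [add_zero] at h
  have h2 : (0 : R) • m + (0 : R) • m = (0 : R) • m + 0 := by rw [← h, add_zero]
  exact add_left_cancel h2

theorem LMod.smul_neg' (r : R) (m : M) : r • (-m) = -(r • m) := by
  have h : r • m + r • (-m) = 0 := by
    rw [← LMod.smul_add' r m (-m), add_neg_cancel, LMod.smul_zero']
  exact eq_neg_of_add_eq_zero_right h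

end basic

/-- `f : M → N` is a homomorphism of (non-unital) `R`-modules. -/
structure IsLHom (R : Type u) [NonUnitalRing R] {M : Type v} {N : Type w}
    [AddCommGroup M] [AddCommGroup N] [LMod R M] [LMod R N] (f : M → N) : Prop where
  map_add : ∀ x y, f (x + y) = f x + f y
  map_smul : ∀ (r : R) (x : M), f (r • x) = r • f x

theorem IsLHom.map_zero {R : Type u} [NonUnitalRing R] {M : Type v} {N : Type w}
    [AddCommGroup M] [AddCommGroup N] [LMod R M] [LMod R N] {f : M → N}
    (hf : IsLHom R f) : f 0 = 0 := by
  have h := hf.map_add 0 0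
  rw [add_zero] at h
  have h2 : f 0 + f 0 = f 0 + 0 := by rw [← h, add_zero]
  exact add_left_cancel h2

theorem IsLHom.map_neg {R : Type u} [NonUnitalRing R] {M : Type v} {N : Type w}
    [AddCommGroup M] [AddCommGroup N] [LMod R M] [LMod R N] {f : M → N}
    (hf : IsLHom R f) (x : M) : f (-x) = -(f x) := by
  have h : f x + f (-x) = 0 := by rw [← hf.map_add, add_neg_cancel, hf.map_zero]
  exact eq_neg_of_add_eq_zero_right h

/-- The type of homomorphisms of (non-unital) `R`-modules. -/
def LinMap (R : Type u) [NonUnitalRing R] (M : Type v) (N : Type w)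
    [AddCommGroup M] [AddCommGroup N] [LMod R M] [LMod R N] : Type (max v w) :=
  {f : M → N // IsLHom R f}

namespace LinMap

variable {R : Type u} [NonUnitalRing R] {M : Type v} {N : Type w}
    [AddCommGroup M] [AddCommGroup N] [LMod R M] [LMod R N]

theorem ext {f g : LinMap R M N} (h : f.1 = g.1) : f = g := Subtype.ext h

instance : Add (LinMap R M N) :=
  ⟨fun f g => ⟨fun x => f.1 x + g.1 x,
    ⟨fun x y => by rw [f.2.map_add, g.2.map_add]; abel,
     fun r x => by rw [f.2.map_smul, g.2.map_smul, LMod.smul_add']⟩⟩⟩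

instance : Zero (LinMap R M N) :=
  ⟨⟨fun _ => 0, ⟨fun _ _ => by rw [add_zero], fun r _ => (LMod.smul_zero' r).symm⟩⟩⟩

instance : Neg (LinMap R M N) :=
  ⟨fun f => ⟨fun x => -(f.1 x),
    ⟨fun x y => by rw [f.2.map_add]; abel,
     fun r x => by rw [f.2.map_smul, LMod.smul_neg']⟩⟩⟩

instance : AddCommGroup (LinMap R M N) where
  add_assoc f g h := ext (funext fun x => add_assoc _ _ _)
  zero_add f := ext (funext fun x => zero_add _)
  add_zero f := ext (funext fun x => add_zero _)
  add_comm f g := ext (funext fun x => add_comm _ _)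
  neg_add_cancel f := ext (funext fun x => neg_add_cancel _)
  nsmul := nsmulRec
  zsmul := zsmulRec

@[simp] theorem add_apply (f g : LinMap R M N) (x : M) : (f + g).1 x = f.1 x + g.1 x := rfl
@[simp] theorem zero_apply (x : M) : (0 : LinMap R M N).1 x = 0 := rfl
@[simp] theorem neg_apply (f : LinMap R M N) (x : M) : (-f).1 x = -(f.1 x) := rfl

end LinMap

/-- The endomorphism ring of a module over a non-unital ring, with the
"diagrammatic" multiplication `(f * g) x = g (f x)` (i.e. `f * g` means
"first `f`, then `g`", matching homomorphisms written on the right). -/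
instance LinMap.instNonUnitalRing {R : Type u} [NonUnitalRing R] {M : Type v}
    [AddCommGroup M] [LMod R M] : NonUnitalRing (LinMap R M M) :=
  { (inferInstance : AddCommGroup (LinMap R M M)) with
    mul := fun f g => ⟨fun x => g.1 (f.1 x),
      ⟨fun x y => by rw [f.2.map_add, g.2.map_add], fun r x => by rw [f.2.map_smul, g.2.map_smul]⟩⟩
    left_distrib := fun f g h => LinMap.ext (funext fun x => rfl)
    right_distrib := fun f g h => LinMap.ext (funext fun x => h.2.map_add _ _)
    zero_mul := fun f => LinMap.ext (funext fun x => f.2.map_zero)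
    mul_zero := fun f => LinMap.ext (funext fun x => rfl)
    mul_assoc := fun f g h => LinMap.ext (funext fun x => rfl) }

@[simp] theorem LinMap.mul_apply {R : Type u} [NonUnitalRing R] {M : Type v}
    [AddCommGroup M] [LMod R M] (f g : LinMap R M M) (x : M) : (f * g).1 x = g.1 (f.1 x) := rfl

/-- A module `M` over a non-unital ring `R` is unitary if `RM = M`. -/
def IsUnitary (R : Type u) [NonUnitalRing R] (M : Type v) [AddCommGroup M] [LMod R M] : Prop :=
  ∀ m : M, m ∈ AddSubgroup.closure {x : M | ∃ (r : R) (n : M), x = r • n}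

/-- The `R`-submodule (as an additive subgroup) generated by a subset. -/
def lspan (R : Type u) [NonUnitalRing R] {M : Type v} [AddCommGroup M] [LMod R M]
    (X : Set M) : AddSubgroup M :=
  AddSubgroup.closure (X ∪ {m | ∃ (r : R) (x : M), x ∈ X ∧ m = r • x})

/-- A subset `A` of a module is finitely generated (as an `R`-submodule). -/
def IsFGSet (R : Type u) [NonUnitalRing R] {M : Type v} [AddCommGroup M] [LMod R M]
    (A : Set M) : Prop :=
  ∃ s : Finset M, (↑s : Set M) ⊆ A ∧ ∀ a ∈ A, a ∈ lspan R (↑s : Set M)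

/-- A finitely generated module over a non-unital ring. -/
def IsFG (R : Type u) [NonUnitalRing R] (M : Type v) [AddCommGroup M] [LMod R M] : Prop :=
  ∃ s : Finset M, ∀ m : M, m ∈ lspan R (↑s : Set M)

/-- The category of unitary left modules over a ring with local units
(objects: unitary left `R`-modules). -/
structure UMod (R : Type u) [NonUnitalRing R] : Type (max u (v + 1)) where
  carrier : Type v
  [grp : AddCommGroup carrier]
  [mod : LMod R carrier]
  unitary : IsUnitary R carrier

attribute [instance] UMod.grp UMod.mod

instance {R : Type u} [NonUnitalRing R] : CoeSort (UMod.{u, v} R) (Type v) := ⟨UMod.carrier⟩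

instance UMod.instCategory {R : Type u} [NonUnitalRing R] : Category (UMod.{u, v} R) where
  Hom M N := LinMap R M.carrier N.carrier
  id M := ⟨fun x => x, ⟨fun _ _ => rfl, fun _ _ => rfl⟩⟩
  comp f g := ⟨fun x => g.1 (f.1 x),
    ⟨fun x y => by rw [f.2.map_add, g.2.map_add], fun r x => by rw [f.2.map_smul, g.2.map_smul]⟩⟩
  id_comp f := LinMap.ext rfl
  comp_id f := LinMap.ext rfl
  assoc f g h := LinMap.ext rfl

@[simp] theorem UMod.comp_apply {R : Type u} [NonUnitalRing R] {M N K : UMod.{u, v} R}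
    (f : M ⟶ N) (g : N ⟶ K) (x : M.carrier) : (f ≫ g).1 x = g.1 (f.1 x) := rfl

@[simp] theorem UMod.id_apply {R : Type u} [NonUnitalRing R] {M : UMod.{u, v} R}
    (x : M.carrier) : (𝟙 M : M ⟶ M).1 x = x := rfl

instance UMod.instPreadditive {R : Type u} [NonUnitalRing R] :
    Preadditive (UMod.{u, v} R) where
  homGroup M N := inferInstanceAs (AddCommGroup (LinMap R M.carrier N.carrier))
  add_comp M N K f f' g := LinMap.ext (funext fun x => g.2.map_add _ _)
  comp_add M N K f g g' := LinMap.ext (funext fun x => rfl)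

/-- A unitary module `P` is a generator of the category of unitary left `R`-modules. -/
def IsGenerator (R : Type u) [NonUnitalRing R] (P : UMod.{u, v} R) : Prop :=
  ∀ (M B : UMod.{u, v} R) (f g : M ⟶ B), f ≠ g → ∃ h : P ⟶ M, h ≫ f ≠ h ≫ g

/-- A set of unitary modules is a cogenerating set for the category of
unitary left `R`-modules. -/
def IsCogenSet (R : Type u) [NonUnitalRing R] (𝒰 : Set (UMod.{u, v} R)) : Prop :=
  ∀ (B M : UMod.{u, v} R) (f g : B ⟶ M), f ≠ g → ∃ U' ∈ 𝒰, ∃ h : M ⟶ U', f ≫ h ≠ g ≫ h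
/-! ### The largest unitary submodule `C·H` of a module `H`, and induced
module structures on hom-groups -/

section umax

variable (C : Type u) [NonUnitalRing C] (H : Type v) [AddCommGroup H] [LMod C H]

/-- `C·H`, the largest unitary `C`-submodule of the `C`-module `H`. -/
def umax : AddSubgroup H :=
  AddSubgroup.closure {h : H | ∃ (c : C) (h' : H), h = c • h'}

variable {C H}

theorem smul_mem_umax (c : C) (h : H) : c • h ∈ umax C H :=
  AddSubgroup.subset_closure ⟨c, h, rfl⟩

/-- An additive, `C`-equivariant map carries `C·H` into `C·H'`. -/
theorem umax_mapsTo {H' : Type w} [AddCommGroup H'] [LMod C H'] (T : H → H')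
    (hadd : ∀ x y, T (x + y) = T x + T y) (hsmul : ∀ (c : C) (x : H), T (c • x) = c • T x)
    {h : H} (hh : h ∈ umax C H) : T h ∈ umax C H' := by
  have hT : IsLHom C T := ⟨hadd, hsmul⟩
  induction hh using AddSubgroup.closure_induction with
  | mem x hx =>
    obtain ⟨c, h', rfl⟩ := hx
    rw [hsmul]; exact smul_mem_umax c (T h')
  | zero => rw [hT.map_zero]; exact (umax C H').zero_mem
  | add x y hx hy ihx ihy => rw [hadd]; exact (umax C H').add_mem ihx ihy
  | neg x hx ihx => rw [hT.map_neg]; exact (umax C H').neg_mem ihx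

instance umax.instLMod : LMod C ↥(umax C H) where
  smul c h := ⟨c • h.1, smul_mem_umax c h.1⟩
  smul_add' c m n := Subtype.ext (LMod.smul_add' c m.1 n.1)
  add_smul' c c' m := Subtype.ext (LMod.add_smul' c c' m.1)
  mul_smul' c c' m := Subtype.ext (LMod.mul_smul' c c' m.1)

@[simp] theorem umax.smul_coe (c : C) (h : ↥(umax C H)) : (c • h).1 = c • h.1 := rfl

/-- If a second ring `D` acts on `H` commuting with the `C`-action,
then `C·H` is stable under the `D`-action. -/
theorem umax_stable {D : Type w} [NonUnitalRing D] [LMod D H] [SMulCommClass C D H]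
    (d : D) {h : H} (hh : h ∈ umax C H) : d • h ∈ umax C H :=
  umax_mapsTo (fun x => d • x) (fun x y => LMod.smul_add' d x y)
    (fun c x => (smul_comm c d x).symm) hh

instance umax.instLMod₂ {D : Type w} [NonUnitalRing D] [LMod D H] [SMulCommClass C D H] :
    LMod D ↥(umax C H) where
  smul d h := ⟨d • h.1, umax_stable d h.2⟩
  smul_add' d m n := Subtype.ext (LMod.smul_add' d m.1 n.1)
  add_smul' d d' m := Subtype.ext (LMod.add_smul' d d' m.1)
  mul_smul' d d' m := Subtype.ext (LMod.mul_smul' d d' m.1)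

instance umax.instSMulCommClass {D : Type w} [NonUnitalRing D] [LMod D H]
    [SMulCommClass C D H] : SMulCommClass C D ↥(umax C H) :=
  ⟨fun c d h => Subtype.ext (smul_comm c d h.1)⟩

/-- If `C` has local units, then `C·H` is a unitary `C`-module. -/
theorem umax_unitary [HasLocalUnits C] : IsUnitary C ↥(umax C H) := by
  intro m
  obtain ⟨h, hh⟩ := m
  induction hh using AddSubgroup.closure_induction with
  | mem x hx =>
    obtain ⟨c, h', rfl⟩ := hx
    obtain ⟨e, he, hec⟩ := HasLocalUnits.exists_unit {c}
    have hc := (hec c (Finset.mem_singleton_self c)).1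
    refine AddSubgroup.subset_closure ⟨e, ⟨c • h', smul_mem_umax c h'⟩, ?_⟩
    refine Subtype.ext ?_
    show c • h' = e • (c • h')
    rw [← LMod.mul_smul', hc]
  | zero =>
    have : (⟨(0 : H), (umax C H).zero_mem⟩ : ↥(umax C H)) = 0 := rfl
    rw [this]; exact AddSubgroup.zero_mem _
  | add x y hx hy ihx ihy =>
    have : (⟨x + y, (umax C H).add_mem hx hy⟩ : ↥(umax C H)) =
        ⟨x, hx⟩ + ⟨y, hy⟩ := rfl
    rw [this]; exact AddSubgroup.add_mem _ ihx ihy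
  | neg x hx ihx =>
    have : (⟨-x, (umax C H).neg_mem hx⟩ : ↥(umax C H)) = -⟨x, hx⟩ := rfl
    rw [this]; exact AddSubgroup.neg_mem _ ihx

end umax

section regular

variable (R : Type u) [NonUnitalRing R]

/-- The left regular module structure of a non-unital ring on itself. -/
instance NonUnitalRing.instLModSelf : LMod R R where
  smul := (· * ·)
  smul_add' := mul_add
  add_smul' := add_mul
  mul_smul' := mul_assoc

@[simp] theorem NonUnitalRing.smul_def (r s : R) : r • s = r * s := rfl

/-- The right regular module structure, as a left module over the opposite ring. -/
instance NonUnitalRing.instLModSelfOp : LMod Rᵐᵒᵖ R where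
  smul r s := s * r.unop
  smul_add' r m n := add_mul m n r.unop
  add_smul' r r' m := mul_add m r.unop r'.unop
  mul_smul' r r' m := (mul_assoc m r'.unop r.unop).symm

@[simp] theorem NonUnitalRing.op_smul_def (r : Rᵐᵒᵖ) (s : R) : r • s = s * r.unop := rfl

instance : SMulCommClass R Rᵐᵒᵖ R :=
  ⟨fun r s x => by
    show r * (x * s.unop) = (r * x) * s.unop
    rw [mul_assoc]⟩

/-- Local units pass to the opposite ring. -/
instance instHasLocalUnitsOp [HasLocalUnits R] : HasLocalUnits Rᵐᵒᵖ where
  exists_unit s := by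
    classical
    obtain ⟨e, he, h⟩ := HasLocalUnits.exists_unit (R := R) (s.image MulOpposite.unop)
    refine ⟨MulOpposite.op e, by rw [← MulOpposite.op_mul, he], fun x hx => ?_⟩
    have hx' := h x.unop (Finset.mem_image_of_mem MulOpposite.unop hx)
    constructor
    · conv_lhs => rw [← MulOpposite.op_unop x, ← MulOpposite.op_mul, hx'.2, MulOpposite.op_unop]
    · conv_lhs => rw [← MulOpposite.op_unop x, ← MulOpposite.op_mul, hx'.1, MulOpposite.op_unop]

end regular

section homact

variable {A B C : Type u} [NonUnitalRing A] [NonUnitalRing B] [NonUnitalRing C]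
variable {X : Type v} {Y : Type w} [AddCommGroup X] [AddCommGroup Y] [LMod B X] [LMod B Y]

/-- The action of `A` on `Hom_B(X, Y)` by precomposition with the right
`A`-action on `X` (homomorphisms written on the right: `(a • f) x = f (x·a)`). -/
instance LinMap.instLModPre [LMod Aᵐᵒᵖ X] [SMulCommClass B Aᵐᵒᵖ X] :
    LMod A (LinMap B X Y) where
  smul a f := ⟨fun x => f.1 (op a • x),
    ⟨fun x y => by rw [LMod.smul_add', f.2.map_add],
     fun r x => by rw [← smul_comm r (op a) x, f.2.map_smul]⟩⟩
  smul_add' a f g := LinMap.ext rfl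
  add_smul' a a' f := LinMap.ext (funext fun x => by
    show f.1 (op (a + a') • x) = f.1 (op a • x) + f.1 (op a' • x)
    rw [← f.2.map_add, ← LMod.add_smul']
    rfl)
  mul_smul' a a' f := LinMap.ext (funext fun x => by
    show f.1 (op (a * a') • x) = f.1 (op a' • (op a • x))
    rw [← LMod.mul_smul']
    rfl)

theorem LinMap.pre_smul_apply [LMod Aᵐᵒᵖ X] [SMulCommClass B Aᵐᵒᵖ X]
    (a : A) (f : LinMap B X Y) (x : X) : (a • f).1 x = f.1 (op a • x) := rfl

/-- The action of `C` on `Hom_B(X, Y)` by postcomposition with a commuting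
`C`-action on `Y`. -/
instance LinMap.instLModPost [LMod C Y] [SMulCommClass B C Y] :
    LMod C (LinMap B X Y) where
  smul c f := ⟨fun x => c • f.1 x,
    ⟨fun x y => by rw [f.2.map_add, LMod.smul_add'],
     fun r x => by rw [f.2.map_smul]; exact (smul_comm r c (f.1 x)).symm⟩⟩
  smul_add' c f g := LinMap.ext (funext fun x => LMod.smul_add' c (f.1 x) (g.1 x))
  add_smul' c c' f := LinMap.ext (funext fun x => LMod.add_smul' c c' (f.1 x))
  mul_smul' c c' f := LinMap.ext (funext fun x => LMod.mul_smul' c c' (f.1 x))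

theorem LinMap.post_smul_apply [LMod C Y] [SMulCommClass B C Y]
    (c : C) (f : LinMap B X Y) (x : X) : (c • f).1 x = c • (f.1 x) := rfl

/-- Pre- and postcomposition actions on hom-groups commute. -/
instance LinMap.instSMulCommClassPrePost [LMod Aᵐᵒᵖ X] [SMulCommClass B Aᵐᵒᵖ X]
    [LMod C Y] [SMulCommClass B C Y] : SMulCommClass A C (LinMap B X Y) :=
  ⟨fun a c f => LinMap.ext rfl⟩

end homact
/-! ### Split direct systems and direct limits of unitary modules -/

section dirsys

variable (R : Type u) [NonUnitalRing R]

/-- A split direct system of unitary left `R`-modules, indexed by a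
quasi-ordered set `(ι, rel)`: a direct system `(P_i, φ_{ij})` together with
splittings `ψ_{ji} : P_j → P_i` (for `i ≤ j`) such that `φ_{ij} ψ_{ji} = id`
and `ψ_{kj} ψ_{ji} = ψ_{ki}`. -/
structure SplitSystem (ι : Type w) (rel : ι → ι → Prop) : Type (max u w (v + 1)) where
  obj : ι → UMod.{u, v} R
  map : ∀ {i j : ι}, rel i j → (obj i ⟶ obj j)
  split : ∀ {i j : ι}, rel i j → (obj j ⟶ obj i)
  map_self : ∀ {i : ι} (h : rel i i) (x : (obj i).carrier), (map h).1 x = x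
  map_map : ∀ {i j k : ι} (hij : rel i j) (hjk : rel j k) (hik : rel i k)
    (x : (obj i).carrier), (map hjk).1 ((map hij).1 x) = (map hik).1 x
  split_map : ∀ {i j : ι} (h : rel i j) (x : (obj i).carrier),
    (split h).1 ((map h).1 x) = x
  split_split : ∀ {i j k : ι} (hij : rel i j) (hjk : rel j k) (hik : rel i k)
    (x : (obj k).carrier), (split hij).1 ((split hjk).1 x) = (split hik).1 x

/-- `P`, together with homomorphisms `φ_i : P_i → P`, is a direct limit of the
direct system `(P_i, φ_{ij})` (with directed index set): the `φ_i` are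
compatible, every element of `P` comes from some `P_i`, and everything killed
by `φ_i` is eventually killed in the system. -/
structure LimitCocone {ι : Type w} {rel : ι → ι → Prop} (D : SplitSystem.{u, v} R ι rel)
    (P : Type v) [AddCommGroup P] [LMod R P] : Type (max u w v) where
  incl : ∀ i, LinMap R (D.obj i).carrier P
  compat : ∀ {i j : ι} (h : rel i j) (x : (D.obj i).carrier),
    (incl j).1 ((D.map h).1 x) = (incl i).1 x
  exhaustive : ∀ x : P, ∃ (i : ι) (y : (D.obj i).carrier), (incl i).1 y = x
  eventually_zero : ∀ i (y : (D.obj i).carrier), (incl i).1 y = 0 →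
    ∃ j, ∃ h : rel i j, (D.map h).1 y = 0

/-- A unitary left `R`-module is locally projective if it is a direct limit of a
split direct system of finitely generated projective unitary left `R`-modules. -/
def IsLocallyProjective (P : Type v) [AddCommGroup P] [LMod R P] : Prop :=
  ∃ (ι : Type v) (rel : ι → ι → Prop),
    (∀ i, rel i i) ∧ (∀ {i j k}, rel i j → rel j k → rel i k) ∧
    Nonempty ι ∧ (∀ i j, ∃ k, rel i k ∧ rel j k) ∧
    ∃ (D : SplitSystem.{u, v} R ι rel) (_ : LimitCocone R D P),
      ∀ i, IsFG R (D.obj i).carrier ∧ CategoryTheory.Projective (D.obj i)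

variable {R}

/-- The transition maps `Ω_{ij} : End_R(P_i) → End_R(P_j)`, `α ↦ ψ_{ji} α φ_{ij}`,
of the direct system of endomorphism rings associated to a split direct system. -/
def SplitSystem.endTrans {ι : Type w} {rel : ι → ι → Prop}
    (D : SplitSystem.{u, v} R ι rel) {i j : ι} (h : rel i j)
    (a : LinMap R (D.obj i).carrier (D.obj i).carrier) :
    LinMap R (D.obj j).carrier (D.obj j).carrier :=
  ⟨fun x => (D.map h).1 (a.1 ((D.split h).1 x)),
   ⟨fun x y => by rw [(D.split h).2.map_add, a.2.map_add, (D.map h).2.map_add],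
    fun r x => by rw [(D.split h).2.map_smul, a.2.map_smul, (D.map h).2.map_smul]⟩⟩

end dirsys
/-! ### The functor `SHom_R(P,−)` and related constructions for a bimodule `P` -/

section shom

variable (R S : Type u) [NonUnitalRing R] [NonUnitalRing S]
variable (P : Type u) [AddCommGroup P] [LMod R P] [LMod Sᵐᵒᵖ P] [SMulCommClass R Sᵐᵒᵖ P]

/-- `SHom_R(P,M) = S·Hom_R(P,M)`, the largest unitary left `S`-submodule of
`Hom_R(P,M)`, as a type. -/
abbrev SHom (M : Type u) [AddCommGroup M] [LMod R M] : Type u :=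
  ↥(umax S (LinMap R P M))

variable {R S P}

/-- The action of `SHom_R(P,−)` on a homomorphism `g : M → N` (postcomposition). -/
def sHomMap {M N : Type u} [AddCommGroup M] [AddCommGroup N] [LMod R M] [LMod R N]
    (g : LinMap R M N) (α : SHom R S P M) : SHom R S P N :=
  ⟨⟨fun x => g.1 (α.1.1 x),
    ⟨fun x y => by rw [α.1.2.map_add, g.2.map_add],
     fun r x => by rw [α.1.2.map_smul, g.2.map_smul]⟩⟩,
   umax_mapsTo (C := S)
     (fun f => ⟨fun x => g.1 (f.1 x),
       ⟨fun x y => by rw [f.2.map_add, g.2.map_add],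
        fun r x => by rw [f.2.map_smul, g.2.map_smul]⟩⟩)
     (fun f f' => LinMap.ext (funext fun x => g.2.map_add _ _))
     (fun s f => LinMap.ext rfl) α.2⟩

theorem sHomMap_apply {M N : Type u} [AddCommGroup M] [AddCommGroup N] [LMod R M]
    [LMod R N] (g : LinMap R M N) (α : SHom R S P M) (x : P) :
    ((sHomMap g α).1).1 x = g.1 (α.1.1 x) := rfl

theorem sHomMap_add {M N : Type u} [AddCommGroup M] [AddCommGroup N] [LMod R M]
    [LMod R N] (g : LinMap R M N) (α β : SHom R S P M) :
    sHomMap g (α + β) = sHomMap g α + sHomMap g β :=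
  Subtype.ext (LinMap.ext (funext fun x =>
    show g.1 (α.1.1 x + β.1.1 x) = g.1 (α.1.1 x) + g.1 (β.1.1 x) from g.2.map_add _ _))

theorem sHomMap_smul {M N : Type u} [AddCommGroup M] [AddCommGroup N] [LMod R M]
    [LMod R N] (g : LinMap R M N) (s : S) (α : SHom R S P M) :
    sHomMap g (s • α) = s • sHomMap g α :=
  Subtype.ext (LinMap.ext (funext fun x => rfl))

/-- `SHom_R(P,g)` as a homomorphism of `S`-modules. -/
def sHomLin {M N : Type u} [AddCommGroup M] [AddCommGroup N] [LMod R M] [LMod R N]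
    (g : LinMap R M N) : LinMap S (SHom R S P M) (SHom R S P N) :=
  ⟨sHomMap g, ⟨sHomMap_add g, fun s α => sHomMap_smul g s α⟩⟩

variable (R S P)

/-- The functor `SHom_R(P,−)` from unitary left `R`-modules to unitary left
`S`-modules. -/
def sHomF [HasLocalUnits S] : UMod.{u, u} R ⥤ UMod.{u, u} S where
  obj M := ⟨SHom R S P M.carrier, umax_unitary⟩
  map g := sHomLin g
  map_id M := LinMap.ext (funext fun α => Subtype.ext (LinMap.ext (funext fun x => rfl)))
  map_comp f g := LinMap.ext (funext fun α => Subtype.ext (LinMap.ext (funext fun x => rfl)))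

/-- `G_P = SHom_R(P,R)`, an `S`-`R`-bimodule. -/
abbrev GP : Type u := ↥(umax S (LinMap R P R))

/-- `RHom_S(G_P, N) = R·Hom_S(G_P, N)`, as a type. -/
abbrev RHomG (N : Type u) [AddCommGroup N] [LMod S N] : Type u :=
  ↥(umax R (LinMap S (GP R S P) N))

variable {R S P}

/-- The action of `RHom_S(G_P,−)` on a homomorphism of `S`-modules. -/
def rHomGMap {N N' : Type u} [AddCommGroup N] [AddCommGroup N'] [LMod S N] [LMod S N']
    (g : LinMap S N N') (α : RHomG R S P N) : RHomG R S P N' :=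
  ⟨⟨fun β => g.1 (α.1.1 β),
    ⟨fun x y => by rw [α.1.2.map_add, g.2.map_add],
     fun s x => by rw [α.1.2.map_smul, g.2.map_smul]⟩⟩,
   umax_mapsTo (C := R)
     (fun f => ⟨fun β => g.1 (f.1 β),
       ⟨fun x y => by rw [f.2.map_add, g.2.map_add],
        fun s x => by rw [f.2.map_smul, g.2.map_smul]⟩⟩)
     (fun f f' => LinMap.ext (funext fun β => g.2.map_add _ _))
     (fun r f => LinMap.ext rfl) α.2⟩

variable (R S P)

/-- The functor `RHom_S(G_P,−)` from unitary left `S`-modules to unitary left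
`R`-modules. -/
def rHomGF [HasLocalUnits R] : UMod.{u, u} S ⥤ UMod.{u, u} R where
  obj N := ⟨RHomG R S P N.carrier, umax_unitary⟩
  map g := ⟨rHomGMap g,
    ⟨fun α β => Subtype.ext (LinMap.ext (funext fun x =>
       show g.1 (α.1.1 x + β.1.1 x) = g.1 (α.1.1 x) + g.1 (β.1.1 x) from g.2.map_add _ _)),
     fun r α => Subtype.ext (LinMap.ext (funext fun x => rfl))⟩⟩
  map_id N := LinMap.ext (funext fun α => Subtype.ext (LinMap.ext (funext fun x => rfl)))
  map_comp f g := LinMap.ext (funext fun α => Subtype.ext (LinMap.ext (funext fun x => rfl)))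

variable {R S P}

/-- The inner component of the evaluation map `γ`: for `n ∈ N` and
`β ∈ Hom_R(P,R)`, the homomorphism `P → N`, `x ↦ (x)β·n`. -/
def gammaInner {N : Type u} [AddCommGroup N] [LMod R N] (n : N) (β : LinMap R P R) :
    LinMap R P N :=
  ⟨fun x => (β.1 x) • n,
   ⟨fun x y => by rw [β.2.map_add, LMod.add_smul'],
    fun r x => by rw [β.2.map_smul, NonUnitalRing.smul_def, LMod.mul_smul']⟩⟩

theorem gammaInner_mem {N : Type u} [AddCommGroup N] [LMod R N] (n : N)
    {β : LinMap R P R} (hβ : β ∈ umax S (LinMap R P R)) :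
    gammaInner n β ∈ umax S (LinMap R P N) :=
  umax_mapsTo (C := S) (fun β => gammaInner n β)
    (fun β β' => LinMap.ext (funext fun x => LMod.add_smul' _ _ _))
    (fun s β => LinMap.ext rfl) hβ

variable (R S P)

/-- The evaluation map `γ_N : N → RHom_S(G_P, SHom_R(P,N))` (before checking that
its values lie in the unitary part `R·Hom_S(G_P, SHom_R(P,N))`):
`n ↦ (β ↦ (x ↦ (x)β·n))`. -/
def gammaFun (N : Type u) [AddCommGroup N] [LMod R N] (n : N) :
    LinMap S (GP R S P) (SHom R S P N) :=
  ⟨fun β => ⟨gammaInner n β.1, gammaInner_mem n β.2⟩,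
   ⟨fun β β' => Subtype.ext (LinMap.ext (funext fun x => LMod.add_smul' _ _ _)),
    fun s β => Subtype.ext (LinMap.ext rfl)⟩⟩

/-- The `s`-trace `sTr(P,M) = Σ_{g ∈ SHom_R(P,M)} Im g` of `P` in `M`. -/
def sTrSub (M : Type u) [AddCommGroup M] [LMod R M] : AddSubgroup M :=
  AddSubgroup.closure {m : M | ∃ f : LinMap R P M, f ∈ umax S (LinMap R P M) ∧ ∃ x : P, m = f.1 x}

/-- `st_P(M) = 0`: the only `R`-submodule `K ⊆ M` with `SHom_R(P,K) = 0` is the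
zero submodule (equivalently, the sum of all such submodules is zero). -/
def stPZero (M : Type u) [AddCommGroup M] [LMod R M] : Prop :=
  ∀ K : AddSubgroup M, (∀ (r : R) (x : M), x ∈ K → r • x ∈ K) →
    (∀ (s : S) (f : LinMap R P M), (∀ x : P, f.1 x ∈ K) → s • f = 0) →
    ∀ m ∈ K, m = 0

/-- `SHom_R(P,X) = 0`. -/
def sHomZero (X : Type u) [AddCommGroup X] [LMod R X] : Prop :=
  ∀ f : LinMap R P X, f ∈ umax S (LinMap R P X) → f = 0

end shom
/-! ### Bimodules, dual hom functors, reflexivity, Morita duality bimodules,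
finiteness conditions -/

section bimod

variable (R S : Type u) [NonUnitalRing R] [NonUnitalRing S]

/-- A bundled `R`-`S`-bimodule over non-unital rings. -/
structure BimodLU : Type (u + 1) where
  carrier : Type u
  [grp : AddCommGroup carrier]
  [lmod : LMod R carrier]
  [rmod : LMod Sᵐᵒᵖ carrier]
  [comm : SMulCommClass R Sᵐᵒᵖ carrier]
  [comm' : SMulCommClass Sᵐᵒᵖ R carrier]

attribute [instance] BimodLU.grp BimodLU.lmod BimodLU.rmod BimodLU.comm BimodLU.comm'

variable (U : Type u) [AddCommGroup U] [LMod R U] [LMod Sᵐᵒᵖ U] [SMulCommClass R Sᵐᵒᵖ U]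
  [SMulCommClass Sᵐᵒᵖ R U]

/-- The canonical map `μ : S → End_R(U)`, `s ↦ (x ↦ x·s)`. -/
def muMap (s : S) : LinMap R U U :=
  ⟨fun x => op s • x,
   ⟨fun x y => LMod.smul_add' (op s) x y, fun r x => (smul_comm r (op s) x).symm⟩⟩

/-- The canonical map `λ : R → End_S(U)`, `r ↦ (x ↦ r·x)`. -/
def lambdaMap (r : R) : LinMap Sᵐᵒᵖ U U :=
  ⟨fun x => r • x,
   ⟨fun x y => LMod.smul_add' r x y, fun s x => smul_comm r s x⟩⟩

/-- `Hom_R(M,U)S`, the largest unitary right `S`-submodule of `Hom_R(M,U)`,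
as a type (a right `S`-module, i.e. a left `Sᵐᵒᵖ`-module). -/
abbrev DHomL (M : Type u) [AddCommGroup M] [LMod R M] : Type u :=
  ↥(umax Sᵐᵒᵖ (LinMap R M U))

/-- `RHom_S(N,U)`, the largest unitary left `R`-submodule of `Hom_S(N,U)`
for a right `S`-module `N`, as a type. -/
abbrev DHomR (N : Type u) [AddCommGroup N] [LMod Sᵐᵒᵖ N] : Type u :=
  ↥(umax R (LinMap Sᵐᵒᵖ N U))

variable {R S U}

/-- Action of the contravariant functor `Hom_R(−,U)S` on morphisms
(precomposition). -/
def dHomLMap {M N : Type u} [AddCommGroup M] [AddCommGroup N] [LMod R M] [LMod R N]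
    (f : LinMap R M N) (α : DHomL R S U N) : DHomL R S U M :=
  ⟨⟨fun x => α.1.1 (f.1 x),
    ⟨fun x y => by rw [f.2.map_add, α.1.2.map_add],
     fun r x => by rw [f.2.map_smul, α.1.2.map_smul]⟩⟩,
   umax_mapsTo (C := Sᵐᵒᵖ)
     (fun g => ⟨fun x => g.1 (f.1 x),
       ⟨fun x y => by rw [f.2.map_add, g.2.map_add],
        fun r x => by rw [f.2.map_smul, g.2.map_smul]⟩⟩)
     (fun g g' => LinMap.ext rfl) (fun s g => LinMap.ext rfl) α.2⟩

/-- Action of the contravariant functor `RHom_S(−,U)` on morphisms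
(precomposition). -/
def dHomRMap {M N : Type u} [AddCommGroup M] [AddCommGroup N] [LMod Sᵐᵒᵖ M]
    [LMod Sᵐᵒᵖ N] (f : LinMap Sᵐᵒᵖ M N) (α : DHomR R S U N) : DHomR R S U M :=
  ⟨⟨fun x => α.1.1 (f.1 x),
    ⟨fun x y => by rw [f.2.map_add, α.1.2.map_add],
     fun s x => by rw [f.2.map_smul, α.1.2.map_smul]⟩⟩,
   umax_mapsTo (C := R)
     (fun g => ⟨fun x => g.1 (f.1 x),
       ⟨fun x y => by rw [f.2.map_add, g.2.map_add],
        fun s x => by rw [f.2.map_smul, g.2.map_smul]⟩⟩)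
     (fun g g' => LinMap.ext rfl) (fun r g => LinMap.ext rfl) α.2⟩

variable (R S U)

/-- The contravariant functor `Hom_R(−,U)S` from unitary left `R`-modules to
unitary right `S`-modules. -/
def dualL [HasLocalUnits S] : (UMod.{u, u} R)ᵒᵖ ⥤ UMod.{u, u} Sᵐᵒᵖ where
  obj M := ⟨DHomL R S U M.unop.carrier, umax_unitary⟩
  map f := ⟨dHomLMap f.unop,
    ⟨fun α β => Subtype.ext (LinMap.ext (funext fun x => rfl)),
     fun s α => Subtype.ext (LinMap.ext (funext fun x => rfl))⟩⟩
  map_id M := LinMap.ext (funext fun α => Subtype.ext (LinMap.ext (funext fun x => rfl)))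
  map_comp f g := LinMap.ext (funext fun α => Subtype.ext (LinMap.ext (funext fun x => rfl)))

/-- The contravariant functor `RHom_S(−,U)` from unitary right `S`-modules to
unitary left `R`-modules. -/
def dualR [HasLocalUnits R] : (UMod.{u, u} Sᵐᵒᵖ)ᵒᵖ ⥤ UMod.{u, u} R where
  obj N := ⟨DHomR R S U N.unop.carrier, umax_unitary⟩
  map f := ⟨dHomRMap f.unop,
    ⟨fun α β => Subtype.ext (LinMap.ext (funext fun x => rfl)),
     fun r α => Subtype.ext (LinMap.ext (funext fun x => rfl))⟩⟩
  map_id N := LinMap.ext (funext fun α => Subtype.ext (LinMap.ext (funext fun x => rfl)))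
  map_comp f g := LinMap.ext (funext fun α => Subtype.ext (LinMap.ext (funext fun x => rfl)))

/-- The underlying function of the evaluation map
`φ_X : X → RHom_S(Hom_R(X,U)S, U)`, `(x)φ_X : β ↦ (x)β`. -/
def evalFunL (X : Type u) [AddCommGroup X] [LMod R X] (x : X) :
    LinMap Sᵐᵒᵖ (DHomL R S U X) U :=
  ⟨fun β => β.1.1 x, ⟨fun β β' => rfl, fun s β => rfl⟩⟩

/-- A unitary left `R`-module `X` is `U`-reflexive: the evaluation map
`φ_X : X → RHom_S(Hom_R(X,U)S, U)` is an isomorphism. -/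
def IsLReflexive (X : Type u) [AddCommGroup X] [LMod R X] : Prop :=
  ∃ h : ∀ x : X, evalFunL R S U X x ∈ umax R (LinMap Sᵐᵒᵖ (DHomL R S U X) U),
    Function.Bijective (fun x : X => (⟨evalFunL R S U X x, h x⟩ : DHomR R S U (DHomL R S U X)))

/-- The underlying function of the evaluation map
`ψ_Y : Y → Hom_R(RHom_S(Y,U),U)S`, `ψ_Y(y) : α ↦ α(y)`. -/
def evalFunR (Y : Type u) [AddCommGroup Y] [LMod Sᵐᵒᵖ Y] (y : Y) :
    LinMap R (DHomR R S U Y) U :=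
  ⟨fun α => α.1.1 y, ⟨fun α α' => rfl, fun r α => rfl⟩⟩

/-- A unitary right `S`-module `Y` is `U`-reflexive: the evaluation map
`ψ_Y : Y → Hom_R(RHom_S(Y,U),U)S` is an isomorphism. -/
def IsRReflexive (Y : Type u) [AddCommGroup Y] [LMod Sᵐᵒᵖ Y] : Prop :=
  ∃ h : ∀ y : Y, evalFunR R S U Y y ∈ umax Sᵐᵒᵖ (LinMap R (DHomR R S U Y) U),
    Function.Bijective (fun y : Y => (⟨evalFunR R S U Y y, h y⟩ : DHomL R S U (DHomR R S U Y)))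

/-- Properties (I) and (II) of a Morita duality bimodule: `U` is the direct
limit of a split direct system of finitely generated injective unitary left
`R`-modules whose members form a cogenerating set for the category of unitary
left `R`-modules, and `μ : S → End_R(U)` is a monomorphism whose image is
exactly the set of endomorphisms factoring through one of the induced
projections. -/
def SatisfiesI_II : Prop :=
  ∃ (ι : Type u) (rel : ι → ι → Prop),
    (∀ i, rel i i) ∧ (∀ {i j k}, rel i j → rel j k → rel i k) ∧
    Nonempty ι ∧ (∀ i j, ∃ k, rel i k ∧ rel j k) ∧
    ∃ (D : SplitSystem.{u, u} R ι rel) (c : LimitCocone R D U)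
      (proj : ∀ i, LinMap R U (D.obj i).carrier),
      (∀ i, IsFG R (D.obj i).carrier ∧ CategoryTheory.Injective (D.obj i)) ∧
      IsCogenSet R {M | ∃ i, M = D.obj i} ∧
      (∀ i (x : (D.obj i).carrier), (proj i).1 ((c.incl i).1 x) = x) ∧
      (∀ {i j} (h : rel i j) (x : U), (D.split h).1 ((proj j).1 x) = (proj i).1 x) ∧
      Function.Injective (muMap R S U) ∧
      Set.range (muMap R S U) =
        {g : LinMap R U U | ∃ (i : ι) (γ : LinMap R (D.obj i).carrier U),
          g.1 = fun x => γ.1 ((proj i).1 x)}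

/-- Properties (III) and (IV) of a Morita duality bimodule (the right-module
side, dual to (I) and (II)). -/
def SatisfiesIII_IV : Prop :=
  ∃ (ι : Type u) (rel : ι → ι → Prop),
    (∀ i, rel i i) ∧ (∀ {i j k}, rel i j → rel j k → rel i k) ∧
    Nonempty ι ∧ (∀ i j, ∃ k, rel i k ∧ rel j k) ∧
    ∃ (D : SplitSystem.{u, u} Sᵐᵒᵖ ι rel) (c : LimitCocone Sᵐᵒᵖ D U)
      (proj : ∀ i, LinMap Sᵐᵒᵖ U (D.obj i).carrier),
      (∀ i, IsFG Sᵐᵒᵖ (D.obj i).carrier ∧ CategoryTheory.Injective (D.obj i)) ∧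
      IsCogenSet Sᵐᵒᵖ {M | ∃ i, M = D.obj i} ∧
      (∀ i (x : (D.obj i).carrier), (proj i).1 ((c.incl i).1 x) = x) ∧
      (∀ {i j} (h : rel i j) (x : U), (D.split h).1 ((proj j).1 x) = (proj i).1 x) ∧
      Function.Injective (lambdaMap R S U) ∧
      Set.range (lambdaMap R S U) =
        {g : LinMap Sᵐᵒᵖ U U | ∃ (i : ι) (γ : LinMap Sᵐᵒᵖ (D.obj i).carrier U),
          g.1 = fun x => γ.1 ((proj i).1 x)}

/-- A Morita duality `R`-`S`-bimodule. -/
def IsMoritaDualityBimod : Prop :=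
  IsUnitary R U ∧ IsUnitary Sᵐᵒᵖ U ∧ SatisfiesI_II R S U ∧ SatisfiesIII_IV R S U

end bimod

section cats

variable (R : Type u) [NonUnitalRing R]

/-- The category of finitely generated unitary left `R`-modules. -/
abbrev FGMod := CategoryTheory.ObjectProperty.FullSubcategory (fun M : UMod.{u, u} R => IsFG R M.carrier)

/-- The category of finitely generated injective unitary left `R`-modules. -/
abbrev InjFGMod := CategoryTheory.ObjectProperty.FullSubcategory
  (fun M : UMod.{u, u} R => IsFG R M.carrier ∧ CategoryTheory.Injective M)

/-- The category of finitely generated projective unitary left `R`-modules. -/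
abbrev ProjFGMod := CategoryTheory.ObjectProperty.FullSubcategory
  (fun M : UMod.{u, u} R => IsFG R M.carrier ∧ CategoryTheory.Projective M)

/-- There is a duality (an additive contravariant equivalence) between the
categories of finitely generated unitary left `R`-modules and finitely
generated unitary right `S`-modules. -/
def ExistsFGDuality (R S : Type u) [NonUnitalRing R] [NonUnitalRing S] : Prop :=
  ∃ F : (FGMod R)ᵒᵖ ⥤ FGMod Sᵐᵒᵖ, F.Additive ∧ F.IsEquivalence

/-- Bundled ring with local units. -/
structure RingLU : Type (u + 1) where
  carrier : Type u
  [ring : NonUnitalRing carrier]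
  [lu : HasLocalUnits carrier]

attribute [instance] RingLU.ring RingLU.lu

/-- A ring with local units is left Morita if there is a ring `R'` with local
units and a duality from finitely generated unitary left `R`-modules to
finitely generated unitary right `R'`-modules. -/
def IsLeftMorita : Prop :=
  ∃ R' : RingLU.{u}, ExistsFGDuality R R'.carrier

/-- `R` is left locally finite: every finitely generated unitary left
`R`-module has finite length (equivalently, the lengths of chains of
submodules of such a module are bounded). -/
def IsLeftLocallyFinite : Prop :=
  ∀ (M : Type u) [AddCommGroup M] [LMod R M], IsUnitary R M → IsFG R M →
    ∃ n : ℕ, ∀ c : Fin (n + 1) → AddSubgroup M,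
      (∀ i (r : R) x, x ∈ c i → r • x ∈ c i) →
      ¬(∀ i : Fin n, c i.castSucc < c i.succ)

/-- `R` is left locally noetherian: every finitely generated unitary left
`R`-module is noetherian. -/
def IsLeftLocallyNoetherian : Prop :=
  ∀ (M : Type u) [AddCommGroup M] [LMod R M], IsUnitary R M → IsFG R M →
    ∀ c : ℕ → AddSubgroup M, (∀ i (r : R) x, x ∈ c i → r • x ∈ c i) →
      (∀ i, c i ≤ c (i + 1)) → ∃ n, ∀ m, n ≤ m → c m = c n

end cats

section principal

variable (R : Type u) [NonUnitalRing R]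

/-- The principal left ideal `Re` of a non-unital ring, for an element `e`. -/
def principalLeft (e : R) : AddSubgroup R where
  carrier := {y : R | ∃ r : R, y = r * e}
  add_mem' := by
    rintro a b ⟨r, hr⟩ ⟨s, hs⟩
    exact ⟨r + s, by rw [hr, hs, add_mul]⟩
  zero_mem' := ⟨0, by rw [zero_mul]⟩
  neg_mem' := by
    rintro a ⟨r, hr⟩
    exact ⟨-r, by rw [hr, neg_mul]⟩

instance (e : R) : LMod R ↥(principalLeft R e) where
  smul r y := ⟨r * y.1, by obtain ⟨s, hs⟩ := y.2; exact ⟨r * s, by rw [hs, mul_assoc]⟩⟩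
  smul_add' r m n := Subtype.ext (mul_add r m.1 n.1)
  add_smul' r s m := Subtype.ext (add_mul r s m.1)
  mul_smul' r s m := Subtype.ext (mul_assoc r s m.1)

/-- The principal right ideal `fS` of a non-unital ring, as a right module
(left module over the opposite ring). -/
def principalRight (f : R) : AddSubgroup R where
  carrier := {y : R | ∃ s : R, y = f * s}
  add_mem' := by
    rintro a b ⟨r, hr⟩ ⟨s, hs⟩
    exact ⟨r + s, by rw [hr, hs, mul_add]⟩
  zero_mem' := ⟨0, by rw [mul_zero]⟩
  neg_mem' := by
    rintro a ⟨r, hr⟩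
    exact ⟨-r, by rw [hr, mul_neg]⟩

instance (f : R) : LMod Rᵐᵒᵖ ↥(principalRight R f) where
  smul s y := ⟨y.1 * s.unop, by
    obtain ⟨t, ht⟩ := y.2; exact ⟨t * s.unop, by rw [ht, mul_assoc]⟩⟩
  smul_add' s m n := Subtype.ext (add_mul m.1 n.1 s.unop)
  add_smul' s t m := Subtype.ext (mul_add m.1 s.unop t.unop)
  mul_smul' s t m := Subtype.ext (mul_assoc m.1 t.unop s.unop).symm

end principal

section restr

variable (R S : Type u) [NonUnitalRing R] [NonUnitalRing S] [HasLocalUnits R] [HasLocalUnits S]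
variable (U : Type u) [AddCommGroup U] [LMod R U] [LMod Sᵐᵒᵖ U] [SMulCommClass R Sᵐᵒᵖ U]
  [SMulCommClass Sᵐᵒᵖ R U]

/-- The restriction of the contravariant functor `Hom_R(−,U)S` to finitely
generated modules, given that it preserves finite generation. -/
def dualLRestr (hFG : ∀ X : UMod.{u, u} R, IsFG R X.carrier →
    IsFG Sᵐᵒᵖ ((dualL R S U).obj (Opposite.op X)).carrier) :
    (FGMod R)ᵒᵖ ⥤ FGMod Sᵐᵒᵖ :=
  CategoryTheory.ObjectProperty.lift _
    ((CategoryTheory.ObjectProperty.ι _).op ⋙ dualL R S U)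
    (fun X => hFG X.unop.obj X.unop.property)

/-- The restriction of the contravariant functor `RHom_S(−,U)` to finitely
generated modules, given that it preserves finite generation. -/
def dualRRestr (hFG : ∀ Y : UMod.{u, u} Sᵐᵒᵖ, IsFG Sᵐᵒᵖ Y.carrier →
    IsFG R ((dualR R S U).obj (Opposite.op Y)).carrier) :
    (FGMod Sᵐᵒᵖ)ᵒᵖ ⥤ FGMod R :=
  CategoryTheory.ObjectProperty.lift _
    ((CategoryTheory.ObjectProperty.ι _).op ⋙ dualR R S U)
    (fun Y => hFG Y.unop.obj Y.unop.property)

end restr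
/-! ### Direct sums of modules over non-unital rings -/

section dfinsupp

variable {R : Type u} [NonUnitalRing R] {ι : Type v} {β : ι → Type w}
  [∀ i, AddCommGroup (β i)] [∀ i, LMod R (β i)]

/-- Pointwise scalar action on a direct sum. -/
def dfinsuppSMul (r : R) (f : Π₀ i, β i) : Π₀ i, β i :=
  f.mapRange (fun _ x => r • x) (fun _ => LMod.smul_zero' r)

theorem dfinsuppSMul_apply (r : R) (f : Π₀ i, β i) (i : ι) :
    dfinsuppSMul r f i = r • f i := DFinsupp.mapRange_apply _ _ f i

instance DFinsupp.instLMod : LMod R (Π₀ i, β i) where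
  smul := dfinsuppSMul
  smul_add' r f g := by
    ext i
    show dfinsuppSMul r (f + g) i = (dfinsuppSMul r f + dfinsuppSMul r g) i
    rw [DFinsupp.add_apply, dfinsuppSMul_apply, dfinsuppSMul_apply, dfinsuppSMul_apply,
      DFinsupp.add_apply]
    exact LMod.smul_add' r (f i) (g i)
  add_smul' r s f := by
    ext i
    show dfinsuppSMul (r + s) f i = (dfinsuppSMul r f + dfinsuppSMul s f) i
    rw [DFinsupp.add_apply, dfinsuppSMul_apply, dfinsuppSMul_apply, dfinsuppSMul_apply]
    exact LMod.add_smul' r s (f i)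
  mul_smul' r s f := by
    ext i
    show dfinsuppSMul (r * s) f i = dfinsuppSMul r (dfinsuppSMul s f) i
    rw [dfinsuppSMul_apply, dfinsuppSMul_apply, dfinsuppSMul_apply]
    exact LMod.mul_smul' r s (f i)

@[simp] theorem DFinsupp.lmod_smul_apply (r : R) (f : Π₀ i, β i) (i : ι) :
    (r • f) i = r • f i := dfinsuppSMul_apply r f i

end dfinsupp
/-! ### Miscellaneous helpers: submodule stability, `Pf`, traces, sums -/

section extra

variable {R : Type u} [NonUnitalRing R] {M : Type v} [AddCommGroup M] [LMod R M]

theorem closure_smul_stable {s : Set M}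
    (h : ∀ (r : R) (x : M), x ∈ s → r • x ∈ AddSubgroup.closure s) (r : R) {x : M}
    (hx : x ∈ AddSubgroup.closure s) : r • x ∈ AddSubgroup.closure s := by
  induction hx using AddSubgroup.closure_induction with
  | mem y hy => exact h r y hy
  | zero => rw [LMod.smul_zero']; exact AddSubgroup.zero_mem _
  | add y z hy hz ihy ihz => rw [LMod.smul_add']; exact AddSubgroup.add_mem _ ihy ihz
  | neg y hy ihy => rw [LMod.smul_neg']; exact AddSubgroup.neg_mem _ ihy

end extra

section pe

variable (R S : Type u) [NonUnitalRing R] [NonUnitalRing S]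
variable (P : Type u) [AddCommGroup P] [LMod R P] [LMod Sᵐᵒᵖ P] [SMulCommClass R Sᵐᵒᵖ P]

/-- The submodule `Pf = {x·f | x ∈ P}` of `P`, for `f ∈ S`. -/
def peSub (f : S) : AddSubgroup P where
  carrier := Set.range (fun x : P => (op f : Sᵐᵒᵖ) • x)
  add_mem' := by
    rintro a b ⟨x, rfl⟩ ⟨y, rfl⟩
    exact ⟨x + y, LMod.smul_add' (op f) x y⟩
  zero_mem' := ⟨0, LMod.smul_zero' _⟩
  neg_mem' := by
    rintro a ⟨x, rfl⟩
    exact ⟨-x, LMod.smul_neg' (op f) x⟩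

instance (f : S) : LMod R ↥(peSub S P f) where
  smul r y := ⟨r • y.1, by
    obtain ⟨x, hx⟩ := y.2
    exact ⟨r • x, by rw [← hx, smul_comm]⟩⟩
  smul_add' r m n := Subtype.ext (LMod.smul_add' r m.1 n.1)
  add_smul' r s m := Subtype.ext (LMod.add_smul' r s m.1)
  mul_smul' r s m := Subtype.ext (LMod.mul_smul' r s m.1)

variable {R S P} in
theorem sTrSub_smul_stable {M : Type u} [AddCommGroup M] [LMod R M] (r : R) {m : M}
    (hm : m ∈ sTrSub R S P M) : r • m ∈ sTrSub R S P M := by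
  refine closure_smul_stable (fun r' x hx => ?_) r hm
  obtain ⟨g, hg, y, rfl⟩ := hx
  exact AddSubgroup.subset_closure ⟨g, hg, r' • y, (g.2.map_smul r' y).symm⟩

instance (M : Type u) [AddCommGroup M] [LMod R M] : LMod R ↥(sTrSub R S P M) where
  smul r y := ⟨r • y.1, sTrSub_smul_stable r y.2⟩
  smul_add' r m n := Subtype.ext (LMod.smul_add' r m.1 n.1)
  add_smul' r s m := Subtype.ext (LMod.add_smul' r s m.1)
  mul_smul' r s m := Subtype.ext (LMod.mul_smul' r s m.1)

end pe

section sum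

/-- Summation over a direct sum against a family of additive maps
(the canonical map `⊕_I M_i → N`). -/
noncomputable def dfinsuppSum {ι : Type u} {β : ι → Type v} [∀ i, AddCommGroup (β i)]
    {γ : Type w} [AddCommGroup γ] (f : ∀ i, β i →+ γ) (x : Π₀ i, β i) : γ :=
  letI := Classical.decEq ι
  DFinsupp.sumAddHom f x

end sum


/-! ### Helper lemmas for Statement 19 -/

section helpers19

variable {A : Type u} [NonUnitalRing A]

/-- In a unitary module over a ring with local units, every element admits a
local left unit. -/
theorem exists_local_unit19 [HasLocalUnits A] {M : Type v} [AddCommGroup M] [LMod A M]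
    (hM : IsUnitary A M) (m : M) : ∃ e : A, e • m = m := by
  classical
  have key : ∀ x ∈ AddSubgroup.closure {x : M | ∃ (r : A) (n : M), x = r • n},
      ∃ F : Finset A, ∀ e : A, (∀ r ∈ F, e * r = r) → e • x = x := by
    intro x hx
    induction hx using AddSubgroup.closure_induction with
    | mem y hy =>
      obtain ⟨r, n, rfl⟩ := hy
      exact ⟨{r}, fun e he => by
        rw [← LMod.mul_smul', he r (Finset.mem_singleton_self r)]⟩
    | zero => exact ⟨∅, fun e _ => LMod.smul_zero' e⟩
    | add y z hy hz ihy ihz =>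
      obtain ⟨F1, h1⟩ := ihy
      obtain ⟨F2, h2⟩ := ihz
      exact ⟨F1 ∪ F2, fun e he => by
        rw [LMod.smul_add', h1 e (fun r hr => he r (Finset.mem_union_left _ hr)),
          h2 e (fun r hr => he r (Finset.mem_union_right _ hr))]⟩
    | neg y hy ihy =>
      obtain ⟨F1, h1⟩ := ihy
      exact ⟨F1, fun e he => by rw [LMod.smul_neg', h1 e he]⟩
  obtain ⟨F, hF⟩ := key m (hM m)
  obtain ⟨e, _, he⟩ := HasLocalUnits.exists_unit F
  exact ⟨e, hF e (fun r hr => (he r hr).1)⟩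

theorem subset_lspan19 {M : Type v} [AddCommGroup M] [LMod A M] {s : Set M} :
    s ⊆ (lspan A s : Set M) :=
  fun _ hx => AddSubgroup.subset_closure (Or.inl hx)

theorem lspan_le19 {M : Type v} [AddCommGroup M] [LMod A M] {s : Set M} {K : AddSubgroup M}
    (hstab : ∀ (r : A) (x : M), x ∈ K → r • x ∈ K) (hsub : s ⊆ K) : lspan A s ≤ K := by
  refine (AddSubgroup.closure_le K).mpr ?_
  rintro x (hx | ⟨r, y, hy, rfl⟩)
  · exact hsub hx
  · exact hstab r y (hsub hy)

theorem lspan_stable19 {M : Type v} [AddCommGroup M] [LMod A M] (s : Set M) (r : A) {x : M}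
    (hx : x ∈ lspan A s) : r • x ∈ lspan A s := by
  refine closure_smul_stable (fun r' y hy => ?_) r hx
  rcases hy with hy | ⟨r'', z, hz, rfl⟩
  · exact AddSubgroup.subset_closure (Or.inr ⟨r', y, hy, rfl⟩)
  · rw [← LMod.mul_smul']
    exact AddSubgroup.subset_closure (Or.inr ⟨r' * r'', z, hz, rfl⟩)

theorem lspan_mapsTo19 {M : Type v} {N : Type w} [AddCommGroup M] [AddCommGroup N]
    [LMod A M] [LMod A N] (f : LinMap A M N) (s : Set M) {x : M}
    (hx : x ∈ lspan A s) : f.1 x ∈ lspan A (f.1 '' s) := by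
  induction hx using AddSubgroup.closure_induction with
  | mem y hy =>
    rcases hy with hy | ⟨r, z, hz, rfl⟩
    · exact subset_lspan19 ⟨y, hy, rfl⟩
    · rw [f.2.map_smul]
      exact lspan_stable19 _ r (subset_lspan19 ⟨z, hz, rfl⟩)
  | zero => rw [f.2.map_zero]; exact AddSubgroup.zero_mem _
  | add y z hy hz ihy ihz => rw [f.2.map_add]; exact AddSubgroup.add_mem _ ihy ihz
  | neg y hy ihy => rw [f.2.map_neg]; exact AddSubgroup.neg_mem _ ihy

theorem isFG_of_surjective19 {M N : Type u} [AddCommGroup M] [AddCommGroup N]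
    [LMod A M] [LMod A N] (f : LinMap A M N) (hf : Function.Surjective f.1)
    (hM : IsFG A M) : IsFG A N := by
  classical
  obtain ⟨s, hs⟩ := hM
  refine ⟨s.image f.1, fun n => ?_⟩
  obtain ⟨m, rfl⟩ := hf n
  have := lspan_mapsTo19 f (↑s) (hs m)
  rwa [← Finset.coe_image] at this

end helpers19


section quot19

variable {A : Type u} [NonUnitalRing A]
variable {M : Type u} [AddCommGroup M] [LMod A M] (N : AddSubgroup M)
variable (hN : ∀ (r : A) (x : M), x ∈ N → r • x ∈ N)

/-- The quotient module structure on `M ⧸ N` for an `A`-stable subgroup `N`. -/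
def quotLMod19 : LMod A (M ⧸ N) where
  smul r := QuotientAddGroup.lift N
    ((QuotientAddGroup.mk' N).comp ⟨⟨(r • ·), LMod.smul_zero' r⟩, LMod.smul_add' r⟩)
    (fun x hx => by
      simpa [QuotientAddGroup.eq_zero_iff] using hN r x hx)
  smul_add' r m n := by
    refine QuotientAddGroup.induction_on m (fun x => ?_)
    refine QuotientAddGroup.induction_on n (fun y => ?_)
    show QuotientAddGroup.mk (r • (x + y)) = QuotientAddGroup.mk (r • x + r • y)
    rw [LMod.smul_add']
  add_smul' r s m := by
    refine QuotientAddGroup.induction_on m (fun x => ?_)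
    show QuotientAddGroup.mk ((r + s) • x) = QuotientAddGroup.mk (r • x + s • x)
    rw [LMod.add_smul']
  mul_smul' r s m := by
    refine QuotientAddGroup.induction_on m (fun x => ?_)
    show QuotientAddGroup.mk ((r * s) • x) = QuotientAddGroup.mk (r • (s • x))
    rw [LMod.mul_smul']

/-- The quotient map as a module homomorphism. -/
def quotMk19 : @LinMap A _ M (M ⧸ N) _ _ _ (quotLMod19 N hN) := by
  letI := quotLMod19 N hN
  exact ⟨QuotientAddGroup.mk, ⟨fun _ _ => rfl, fun _ _ => rfl⟩⟩

theorem quot_unitary19 (hM : IsUnitary A M) :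
    @IsUnitary A _ (M ⧸ N) _ (quotLMod19 N hN) := by
  letI := quotLMod19 N hN
  intro m
  refine QuotientAddGroup.induction_on m (fun x => ?_)
  exact umax_mapsTo (C := A) (QuotientAddGroup.mk)
    (fun _ _ => rfl) (fun _ _ => rfl) (hM x)

theorem quot_fg19 (hM : IsFG A M) :
    @IsFG A _ (M ⧸ N) _ (quotLMod19 N hN) := by
  letI := quotLMod19 N hN
  exact isFG_of_surjective19 (quotMk19 N hN)
    (fun y => QuotientAddGroup.induction_on y (fun x => ⟨x, rfl⟩)) hM

/-- The module structure on a stable subgroup. -/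
def stabLMod19 : LMod A ↥N where
  smul r y := ⟨r • y.1, hN r y.1 y.2⟩
  smul_add' r m n := Subtype.ext (LMod.smul_add' r m.1 n.1)
  add_smul' r s m := Subtype.ext (LMod.add_smul' r s m.1)
  mul_smul' r s m := Subtype.ext (LMod.mul_smul' r s m.1)

/-- The inclusion of a stable subgroup as a module homomorphism. -/
def stabIncl19 : @LinMap A _ ↥N M _ _ (stabLMod19 N hN) _ := by
  letI := stabLMod19 N hN
  exact ⟨Subtype.val, ⟨fun _ _ => rfl, fun _ _ => rfl⟩⟩

end quot19


section master19

variable (A B : Type u) [NonUnitalRing A] [NonUnitalRing B]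
variable (U : Type u) [AddCommGroup U] [LMod A U] [LMod B U]
variable [SMulCommClass A B U] [SMulCommClass B A U]

/-- `Hom_A(X,U)·B`, the largest unitary `B`-submodule of `Hom_A(X,U)`. -/
abbrev DLm19 (X : Type u) [AddCommGroup X] [LMod A X] : Type u :=
  ↥(umax B (LinMap A X U))

variable {A B U}

/-- The contravariant action on morphisms (precomposition). -/
def dlm19 {X X' : Type u} [AddCommGroup X] [AddCommGroup X'] [LMod A X] [LMod A X']
    (h : LinMap A X' X) (α : DLm19 A B U X) : DLm19 A B U X' :=
  ⟨⟨fun x => α.1.1 (h.1 x),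
    ⟨fun x y => by rw [h.2.map_add, α.1.2.map_add],
     fun r x => by rw [h.2.map_smul, α.1.2.map_smul]⟩⟩,
   umax_mapsTo (C := B)
     (fun g => ⟨fun x => g.1 (h.1 x),
       ⟨fun x y => by rw [h.2.map_add, g.2.map_add],
        fun r x => by rw [h.2.map_smul, g.2.map_smul]⟩⟩)
     (fun g g' => LinMap.ext rfl) (fun s g => LinMap.ext rfl) α.2⟩

/-- `dlm19` bundled as a `B`-module homomorphism. -/
def dlmLin19 {X X' : Type u} [AddCommGroup X] [AddCommGroup X'] [LMod A X] [LMod A X']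
    (h : LinMap A X' X) : LinMap B (DLm19 A B U X) (DLm19 A B U X') :=
  ⟨dlm19 h, ⟨fun α β => Subtype.ext (LinMap.ext rfl),
    fun b α => Subtype.ext (LinMap.ext rfl)⟩⟩

variable (A B U)

/-- The dual functor is fully faithful on finitely generated unitary modules. -/
def HffL19 : Prop :=
  ∀ (X X' : Type u) [AddCommGroup X] [AddCommGroup X'] [LMod A X] [LMod A X'],
    IsUnitary A X → IsFG A X → IsUnitary A X' → IsFG A X' →
      Function.Bijective (fun h : LinMap A X' X => dlmLin19 (B := B) (U := U) h)

/-- The dual functor preserves finite generation. -/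
def HfgL19 : Prop :=
  ∀ (X : Type u) [AddCommGroup X] [LMod A X], IsUnitary A X → IsFG A X →
    IsFG B (DLm19 A B U X)

variable {A B U}

/-- Separation: if all functionals in `Hom_A(W,U)·B` kill `w`, then `w = 0`. -/
theorem sep19 [HasLocalUnits B] (hff : HffL19 A B U)
    (W : Type u) [AddCommGroup W] [LMod A W] (hWu : IsUnitary A W) (hWfg : IsFG A W)
    (w : W) (hw : ∀ f : LinMap A W U, f ∈ umax B (LinMap A W U) → f.1 w = 0) :
    w = 0 := by
  classical
  set Z : AddSubgroup W :=
    { carrier := {x : W | ∀ f : LinMap A W U, f ∈ umax B (LinMap A W U) → f.1 x = 0}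
      add_mem' := fun {a b} ha hb f hf => by
        rw [f.2.map_add, ha f hf, hb f hf, add_zero]
      zero_mem' := fun f hf => f.2.map_zero
      neg_mem' := fun {a} ha f hf => by rw [f.2.map_neg, ha f hf, neg_zero] } with hZdef
  have hZstab : ∀ (r : A) (x : W), x ∈ Z → r • x ∈ Z := fun r x hx f hf => by
    rw [f.2.map_smul, hx f hf, LMod.smul_zero']
  letI instQ : LMod A (W ⧸ Z) := quotLMod19 Z hZstab
  have hQu := quot_unitary19 Z hZstab hWu
  have hQfg := quot_fg19 Z hZstab hWfg
  set q : LinMap A W (W ⧸ Z) := quotMk19 Z hZstab with hq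
  -- `dlmLin19 q` is bijective
  have hinj : Function.Injective (dlmLin19 (B := B) (U := U) q).1 := by
    intro α β hab
    refine Subtype.ext (LinMap.ext (funext fun y => ?_))
    refine QuotientAddGroup.induction_on y (fun x => ?_)
    exact congrArg (fun g => g.1.1 x) hab
  have hsurj : Function.Surjective (dlmLin19 (B := B) (U := U) q).1 := by
    intro f
    obtain ⟨e, he⟩ := exists_local_unit19 (umax_unitary (C := B)) f
    have hkill : ∀ z ∈ Z, f.1.1 z = 0 := fun z hz => hz f.1 f.2
    have hcoe : ∀ x, e • f.1.1 x = f.1.1 x := fun x =>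
      congrArg (fun g => g.1 x) (congrArg Subtype.val he)
    set fhom : W →+ U := ⟨⟨f.1.1, f.1.2.map_zero⟩, f.1.2.map_add⟩ with hfhom
    set fbar : LinMap A (W ⧸ Z) U :=
      ⟨QuotientAddGroup.lift Z fhom hkill,
        ⟨fun a b => (QuotientAddGroup.lift Z fhom hkill).map_add a b,
         fun r y => QuotientAddGroup.induction_on y (fun x =>
           show f.1.1 (r • x) = r • f.1.1 x from f.1.2.map_smul r x)⟩⟩ with hfbar
    have hfbarmem : fbar ∈ umax B (LinMap A (W ⧸ Z) U) := by
      refine AddSubgroup.subset_closure ⟨e, fbar, ?_⟩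
      refine LinMap.ext (funext fun y => ?_)
      refine QuotientAddGroup.induction_on y (fun x => ?_)
      exact (hcoe x).symm
    exact ⟨⟨fbar, hfbarmem⟩, Subtype.ext (LinMap.ext rfl)⟩
  set eqv := Equiv.ofBijective _ ⟨hinj, hsurj⟩ with heqv
  have heqvadd : ∀ a b, eqv (a + b) = eqv a + eqv b :=
    (dlmLin19 (B := B) (U := U) q).2.map_add
  have heqvsmul : ∀ (b : B) a, eqv (b • a) = b • eqv a :=
    (dlmLin19 (B := B) (U := U) q).2.map_smul
  set ι : LinMap B (DLm19 A B U W) (DLm19 A B U (W ⧸ Z)) :=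
    ⟨fun y => eqv.symm y,
      ⟨fun a b => eqv.injective (by
          rw [Equiv.apply_symm_apply, heqvadd, Equiv.apply_symm_apply,
            Equiv.apply_symm_apply]),
       fun b a => eqv.injective (by
          rw [Equiv.apply_symm_apply, heqvsmul, Equiv.apply_symm_apply])⟩⟩ with hι
  obtain ⟨h, hh⟩ := (hff W (W ⧸ Z) hWu hWfg hQu hQfg).2 ι
  set cmap : LinMap A W W :=
    ⟨fun x => h.1 (QuotientAddGroup.mk x),
      ⟨fun x y => by
        show h.1 (QuotientAddGroup.mk x + QuotientAddGroup.mk y) = _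
        rw [h.2.map_add],
       fun r x => by
        show h.1 (r • (QuotientAddGroup.mk x : W ⧸ Z)) = r • h.1 (QuotientAddGroup.mk x)
        rw [h.2.map_smul]⟩⟩ with hcmap
  set idW : LinMap A W W := ⟨fun x => x, ⟨fun _ _ => rfl, fun _ _ => rfl⟩⟩ with hidW
  have hc : dlmLin19 (B := B) (U := U) cmap = dlmLin19 (B := B) (U := U) idW := by
    refine LinMap.ext (funext fun α => Subtype.ext (LinMap.ext (funext fun x => ?_)))
    have hh2 : dlmLin19 (B := B) (U := U) h = ι := hh
    have h1 : (dlmLin19 (B := B) (U := U) q).1 ((dlmLin19 (B := B) (U := U) h).1 α) = α := by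
      rw [hh2]
      exact eqv.apply_symm_apply α
    exact congrArg (fun g => g.1.1 x) h1
  have hcid : cmap = idW := (hff W W hWu hWfg hWu hWfg).1 hc
  have hmkw : (QuotientAddGroup.mk w : W ⧸ Z) = 0 :=
    (QuotientAddGroup.eq_zero_iff w).mpr hw
  have : cmap.1 w = idW.1 w := congrArg (fun g => g.1 w) hcid
  rw [hcmap] at this
  simp only at this
  rw [hmkw, h.2.map_zero] at this
  exact this.symm

/-- Surjectivity of the evaluation map for finitely generated modules. -/
theorem phi_surj19 [HasLocalUnits A] [HasLocalUnits B]
    (hfgL : HfgL19 A B U) (hfgR : HfgL19 B A U) (hff : HffL19 A B U)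
    (M : Type u) [AddCommGroup M] [LMod A M] (hMu : IsUnitary A M) (hMfg : IsFG A M)
    (ξ : DLm19 B A U (DLm19 A B U M)) :
    ∃ m : M, ∀ f : DLm19 A B U M, ξ.1.1 f = f.1.1 m := by
  have hDLu : IsUnitary B (DLm19 A B U M) := umax_unitary
  have hDLfg : IsFG B (DLm19 A B U M) := hfgL M hMu hMfg
  have hX'u : IsUnitary A (DLm19 B A U (DLm19 A B U M)) := umax_unitary
  have hX'fg : IsFG A (DLm19 B A U (DLm19 A B U M)) := hfgR (DLm19 A B U M) hDLu hDLfg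
  -- the map `u : f ↦ (ξ' ↦ ξ'(f))`
  have umem : ∀ f : DLm19 A B U M,
      (⟨fun x' => x'.1.1 f, ⟨fun a b => rfl, fun r x' => rfl⟩⟩ :
        LinMap A (DLm19 B A U (DLm19 A B U M)) U) ∈
        umax B (LinMap A (DLm19 B A U (DLm19 A B U M)) U) := by
    intro f
    obtain ⟨e, he⟩ := exists_local_unit19 hDLu f
    refine AddSubgroup.subset_closure
      ⟨e, ⟨fun x' => x'.1.1 f, ⟨fun a b => rfl, fun r x' => rfl⟩⟩, ?_⟩
    refine LinMap.ext (funext fun x' => ?_)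
    show x'.1.1 f = e • x'.1.1 f
    conv_lhs => rw [← he]
    exact x'.1.2.map_smul e f
  set u : LinMap B (DLm19 A B U M) (DLm19 A B U (DLm19 B A U (DLm19 A B U M))) :=
    ⟨fun f => ⟨⟨fun x' => x'.1.1 f, ⟨fun a b => rfl, fun r x' => rfl⟩⟩, umem f⟩,
      ⟨fun f g => Subtype.ext (LinMap.ext (funext fun x' => x'.1.2.map_add f g)),
       fun b f => Subtype.ext (LinMap.ext (funext fun x' => x'.1.2.map_smul b f))⟩⟩ with hu
  obtain ⟨w, hw⟩ := (hff M (DLm19 B A U (DLm19 A B U M)) hMu hMfg hX'u hX'fg).2 u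
  refine ⟨w.1 ξ, fun f => ?_⟩
  exact (congrArg (fun (g : LinMap B (DLm19 A B U M)
    (DLm19 A B U (DLm19 B A U (DLm19 A B U M)))) => (g.1 f).1.1 ξ) hw).symm

end master19


section master19b

variable {A B : Type u} [NonUnitalRing A] [NonUnitalRing B]
variable {U : Type u} [AddCommGroup U] [LMod A U] [LMod B U]
variable [SMulCommClass A B U] [SMulCommClass B A U]

set_option maxHeartbeats 1000000 in
/-- Every `A`-stable subgroup of a finitely generated unitary module is
finitely generated. -/
theorem stable_fg19 [HasLocalUnits A] [HasLocalUnits B]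
    (hfgL : HfgL19 A B U) (hfgR : HfgL19 B A U) (hff : HffL19 A B U)
    (M : Type u) [AddCommGroup M] [LMod A M] (hMu : IsUnitary A M) (hMfg : IsFG A M)
    (N : AddSubgroup M) (hN : ∀ (r : A) (x : M), x ∈ N → r • x ∈ N) :
    ∃ s : Finset M, ↑s ⊆ (N : Set M) ∧ ∀ n ∈ N, n ∈ lspan A (↑s : Set M) := by
  classical
  -- the quotient module M/N
  letI instQN : LMod A (M ⧸ N) := quotLMod19 N hN
  have hQu := quot_unitary19 N hN hMu
  have hQfg := quot_fg19 N hN hMfg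
  -- the annihilator of N in DL(M)
  set Ann : AddSubgroup (DLm19 A B U M) :=
    { carrier := {f : DLm19 A B U M | ∀ n ∈ N, f.1.1 n = 0}
      add_mem' := fun {a b} ha hb n hn =>
        show a.1.1 n + b.1.1 n = 0 by rw [ha n hn, hb n hn, add_zero]
      zero_mem' := fun n hn => rfl
      neg_mem' := fun {a} ha n hn =>
        show -(a.1.1 n) = 0 by rw [ha n hn, neg_zero] } with hAnn
  have hAnnStab : ∀ (b : B) (f : DLm19 A B U M), f ∈ Ann → b • f ∈ Ann := by
    intro b f hf n hn
    show b • f.1.1 n = 0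
    rw [hf n hn, LMod.smul_zero']
  letI instY : LMod B (DLm19 A B U M ⧸ Ann) := quotLMod19 Ann hAnnStab
  have hYu := quot_unitary19 Ann hAnnStab (umax_unitary (C := B))
  have hYfg := quot_fg19 Ann hAnnStab (hfgL M hMu hMfg)
  have hDRYfg : IsFG A (DLm19 B A U (DLm19 A B U M ⧸ Ann)) :=
    hfgR (DLm19 A B U M ⧸ Ann) hYu hYfg
  letI instN : LMod A ↥N := stabLMod19 N hN
  -- the map θ : N → RHom(DL(M)/Ann, U)
  set θ0 : ∀ n : ↥N, LinMap B (DLm19 A B U M ⧸ Ann) U := fun n =>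
    ⟨QuotientAddGroup.lift Ann
        ⟨⟨fun f => f.1.1 n.1, rfl⟩, fun f g => rfl⟩ (fun f hf => hf n.1 n.2),
      ⟨fun a b => (QuotientAddGroup.lift Ann
        ⟨⟨fun f => f.1.1 n.1, rfl⟩, fun f g => rfl⟩ (fun f hf => hf n.1 n.2)).map_add a b,
       fun b y => QuotientAddGroup.induction_on y (fun f => rfl)⟩⟩
    with hθ00
  have θmem : ∀ n : ↥N, θ0 n ∈ umax A (LinMap B (DLm19 A B U M ⧸ Ann) U) := by
    intro n
    obtain ⟨e, he⟩ := exists_local_unit19 hMu n.1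
    refine AddSubgroup.subset_closure ⟨e, θ0 n, ?_⟩
    refine LinMap.ext (funext fun y => ?_)
    refine QuotientAddGroup.induction_on y (fun f => ?_)
    show f.1.1 n.1 = e • f.1.1 n.1
    conv_lhs => rw [← he]
    exact f.1.2.map_smul e n.1
  set θ : ↥N → DLm19 B A U (DLm19 A B U M ⧸ Ann) := fun n => ⟨θ0 n, θmem n⟩ with hθ
  have hθadd : ∀ n n', θ (n + n') = θ n + θ n' := by
    intro n n'
    refine Subtype.ext (LinMap.ext (funext fun y => ?_))
    refine QuotientAddGroup.induction_on y (fun f => ?_)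
    exact f.1.2.map_add n.1 n'.1
  have hθsmul : ∀ (r : A) (n : ↥N), θ (r • n) = r • θ n := by
    intro r n
    refine Subtype.ext (LinMap.ext (funext fun y => ?_))
    refine QuotientAddGroup.induction_on y (fun f => ?_)
    exact f.1.2.map_smul r n.1
  set θL : LinMap A ↥N (DLm19 B A U (DLm19 A B U M ⧸ Ann)) := ⟨θ, ⟨hθadd, hθsmul⟩⟩ with hθL
  -- θ is injective
  have hθinj : Function.Injective θ := by
    have h0 : ∀ n : ↥N, θ n = 0 → n = 0 := by
      intro n h0n
      refine Subtype.ext ?_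
      refine sep19 hff M hMu hMfg n.1 (fun f hf => ?_)
      exact congrArg (fun g => g.1.1 (QuotientAddGroup.mk (⟨f, hf⟩ : DLm19 A B U M))) h0n
    intro n n' hnn'
    have : θ (n - n') = 0 := by
      rw [sub_eq_add_neg, hθadd]
      have hneg : θ (-n') = -(θ n') := θL.2.map_neg n'
      rw [hneg, hnn', add_neg_cancel]
    have := h0 _ this
    rwa [sub_eq_zero] at this
  -- θ is surjective
  have hθsurj : Function.Surjective θ := by
    intro g
    obtain ⟨e, he⟩ := exists_local_unit19 (umax_unitary (C := A)) g
    have hecoe : ∀ y, e • g.1.1 y = g.1.1 y := fun y =>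
      congrArg (fun t => t.1 y) (congrArg Subtype.val he)
    -- the composite g ∘ mk as an element of DR(DL(M))
    set gp0 : LinMap B (DLm19 A B U M) U :=
      ⟨fun f => g.1.1 (QuotientAddGroup.mk f),
        ⟨fun f f' => by
          show g.1.1 (QuotientAddGroup.mk f + QuotientAddGroup.mk f') = _
          rw [g.1.2.map_add],
         fun b f => by
          show g.1.1 (b • (QuotientAddGroup.mk f : DLm19 A B U M ⧸ Ann)) = _
          rw [g.1.2.map_smul]⟩⟩ with hgp0
    have gpmem : gp0 ∈ umax A (LinMap B (DLm19 A B U M) U) := by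
      refine AddSubgroup.subset_closure ⟨e, gp0, ?_⟩
      refine LinMap.ext (funext fun f => ?_)
      exact (hecoe (QuotientAddGroup.mk f)).symm
    obtain ⟨m, hm⟩ := phi_surj19 hfgL hfgR hff M hMu hMfg ⟨gp0, gpmem⟩
    -- m lies in N
    have hmN : m ∈ N := by
      have h0 : (QuotientAddGroup.mk m : M ⧸ N) = 0 := by
        refine sep19 hff (M ⧸ N) hQu hQfg _ (fun h hh => ?_)
        obtain ⟨e', he'⟩ :=
          exists_local_unit19 (umax_unitary (C := B)) (⟨h, hh⟩ : DLm19 A B U (M ⧸ N))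
        have he'coe : ∀ x, e' • h.1 x = h.1 x := fun x =>
          congrArg (fun t => t.1 x) (congrArg Subtype.val he')
        set hq0 : LinMap A M U :=
          ⟨fun x => h.1 (QuotientAddGroup.mk x),
            ⟨fun x y => by
              show h.1 (QuotientAddGroup.mk x + QuotientAddGroup.mk y) = _
              rw [h.2.map_add],
             fun r x => by
              show h.1 (r • (QuotientAddGroup.mk x : M ⧸ N)) = _
              rw [h.2.map_smul]⟩⟩ with hhq0
        have hqmem : hq0 ∈ umax B (LinMap A M U) := by
          refine AddSubgroup.subset_closure ⟨e', hq0, ?_⟩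
          refine LinMap.ext (funext fun x => ?_)
          exact (he'coe (QuotientAddGroup.mk x)).symm
        have hqAnn : (⟨hq0, hqmem⟩ : DLm19 A B U M) ∈ Ann := by
          intro n hn
          show h.1 (QuotientAddGroup.mk n) = 0
          rw [(QuotientAddGroup.eq_zero_iff n).mpr hn, h.2.map_zero]
        calc h.1 (QuotientAddGroup.mk m)
            = g.1.1 (QuotientAddGroup.mk (⟨hq0, hqmem⟩ : DLm19 A B U M)) :=
              (hm ⟨hq0, hqmem⟩).symm
          _ = g.1.1 0 := by rw [(QuotientAddGroup.eq_zero_iff _).mpr hqAnn]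
          _ = 0 := g.1.2.map_zero
      exact (QuotientAddGroup.eq_zero_iff m).mp h0
    refine ⟨⟨m, hmN⟩, ?_⟩
    refine Subtype.ext (LinMap.ext (funext fun y => ?_))
    refine QuotientAddGroup.induction_on y (fun f => ?_)
    exact (hm f).symm
  -- transfer finite generation to N
  set eqv := Equiv.ofBijective θ ⟨hθinj, hθsurj⟩ with heqv
  have heqvadd : ∀ a b, eqv (a + b) = eqv a + eqv b := hθadd
  have heqvsmul : ∀ (r : A) a, eqv (r • a) = r • eqv a := hθsmul
  set θinv : LinMap A (DLm19 B A U (DLm19 A B U M ⧸ Ann)) ↥N :=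
    ⟨fun y => eqv.symm y,
      ⟨fun a b => eqv.injective (by
          rw [Equiv.apply_symm_apply, heqvadd, Equiv.apply_symm_apply,
            Equiv.apply_symm_apply]),
       fun r a => eqv.injective (by
          rw [Equiv.apply_symm_apply, heqvsmul, Equiv.apply_symm_apply])⟩⟩ with hθinv
  have hNfg : IsFG A ↥N :=
    isFG_of_surjective19 θinv (fun n => ⟨θ n, eqv.symm_apply_apply n⟩) hDRYfg
  obtain ⟨s', hs'⟩ := hNfg
  refine ⟨s'.image Subtype.val, ?_, fun n hn => ?_⟩
  · intro x hx
    obtain ⟨y, _, rfl⟩ := Finset.mem_image.mp (Finset.mem_coe.mp hx)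
    exact y.2
  · have := lspan_mapsTo19 (stabIncl19 N hN) (↑s') (hs' ⟨n, hn⟩)
    rwa [← Finset.coe_image] at this

/-- The main generic result: the noetherian property. -/
theorem master19 [HasLocalUnits A] [HasLocalUnits B]
    (hfgL : HfgL19 A B U) (hfgR : HfgL19 B A U) (hff : HffL19 A B U) :
    IsLeftLocallyNoetherian A := by
  intro M _ _ hMu hMfg c hstab hmono
  have hc : ∀ i j, i ≤ j → c i ≤ c j := fun i j hij =>
    Nat.le_induction le_rfl (fun k _ ih => le_trans ih (hmono k)) j hij
  set Nall : AddSubgroup M :=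
    { carrier := {x : M | ∃ i, x ∈ c i}
      add_mem' := fun {a b} ⟨i, hi⟩ ⟨j, hj⟩ =>
        ⟨max i j, AddSubgroup.add_mem _ (hc i (max i j) (le_max_left i j) hi)
          (hc j (max i j) (le_max_right i j) hj)⟩
      zero_mem' := ⟨0, AddSubgroup.zero_mem _⟩
      neg_mem' := fun {a} ⟨i, hi⟩ => ⟨i, AddSubgroup.neg_mem _ hi⟩ } with hNall
  have hNstab : ∀ (r : A) (x : M), x ∈ Nall → r • x ∈ Nall := by
    rintro r x ⟨i, hi⟩
    exact ⟨i, hstab i r x hi⟩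
  obtain ⟨s, hsub, hgen⟩ := stable_fg19 hfgL hfgR hff M hMu hMfg Nall hNstab
  have hfind : ∀ t : Finset M, (∀ x ∈ t, ∃ i, x ∈ c i) → ∃ n, ∀ x ∈ t, x ∈ c n := by
    classical
    intro t
    induction t using Finset.induction with
    | empty => exact fun _ => ⟨0, fun x hx => absurd hx (Finset.notMem_empty x)⟩
    | @insert a t' hnotmem ih =>
      intro ht
      obtain ⟨n1, hn1⟩ := ih (fun x hx => ht x (Finset.mem_insert_of_mem hx))
      obtain ⟨n2, hn2⟩ := ht a (Finset.mem_insert_self a t')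
      refine ⟨max n1 n2, fun x hx => ?_⟩
      rcases Finset.mem_insert.mp hx with rfl | hx'
      · exact hc n2 (max n1 n2) (le_max_right n1 n2) hn2
      · exact hc n1 (max n1 n2) (le_max_left n1 n2) (hn1 x hx')
  obtain ⟨n, hn⟩ := hfind s (fun x hx => hsub (Finset.mem_coe.mpr hx))
  refine ⟨n, fun m hm => le_antisymm (fun x hx => ?_) (hc n m hm)⟩
  have hxN : x ∈ Nall := ⟨m, hx⟩
  exact lspan_le19 (fun r y hy => hstab n r y hy) (fun y hy => hn y (Finset.mem_coe.mp hy))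
    (hgen x hxN)

end master19b

/-! ## STATEMENT 19
If `Hom_R(−,U)S : Rmod → modS` is a duality with inverse `RHom_S(−,U)`, then
`R` is left locally noetherian and `S` is right locally noetherian. -/
theorem locally_noetherian_of_duality
    (R S : Type u) [NonUnitalRing R] [NonUnitalRing S]
    [HasLocalUnits R] [HasLocalUnits S]
    (U : Type u) [AddCommGroup U] [LMod R U] [LMod Sᵐᵒᵖ U]
    [SMulCommClass R Sᵐᵒᵖ U] [SMulCommClass Sᵐᵒᵖ R U]
    (hUl : IsUnitary R U) (hUr : IsUnitary Sᵐᵒᵖ U)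
    -- `Hom_R(−,U)S` and `RHom_S(−,U)` carry finitely generated modules to
    -- finitely generated modules:
    (hFG₁ : ∀ X : UMod.{u, u} R, IsFG R X.carrier →
      IsFG Sᵐᵒᵖ ((dualL R S U).obj (Opposite.op X)).carrier)
    (hFG₂ : ∀ Y : UMod.{u, u} Sᵐᵒᵖ, IsFG Sᵐᵒᵖ Y.carrier →
      IsFG R ((dualR R S U).obj (Opposite.op Y)).carrier)
    -- and the restricted contravariant functors are mutually inverse:
    (h₁ : Nonempty (dualLRestr R S U hFG₁ ⋙ (dualRRestr R S U hFG₂).rightOp ≅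
      CategoryTheory.Functor.id ((FGMod R)ᵒᵖ)))
    (h₂ : Nonempty ((dualRRestr R S U hFG₂).rightOp ⋙ dualLRestr R S U hFG₁ ≅
      CategoryTheory.Functor.id (FGMod Sᵐᵒᵖ))) :
    IsLeftLocallyNoetherian R ∧ IsLeftLocallyNoetherian Sᵐᵒᵖ := by
  classical
  obtain ⟨iso1⟩ := h₁
  obtain ⟨iso2⟩ := h₂
  set F := dualLRestr R S U hFG₁ with hF
  set G := (dualRRestr R S U hFG₂).rightOp with hG
  let E := CategoryTheory.Equivalence.mk F G iso1.symm iso2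
  haveI hFE : F.IsEquivalence := E.isEquivalence_functor
  haveI hGE : G.IsEquivalence := E.isEquivalence_inverse
  haveI : F.Full := inferInstance
  haveI : F.Faithful := inferInstance
  haveI : G.Full := inferInstance
  haveI : G.Faithful := inferInstance
  -- finite generation hypotheses
  have hfgL : HfgL19 R Sᵐᵒᵖ U := by
    intro X _ _ hXu hXfg
    exact hFG₁ ⟨X, hXu⟩ hXfg
  have hfgR : HfgL19 Sᵐᵒᵖ R U := by
    intro Y _ _ hYu hYfg
    exact hFG₂ ⟨Y, hYu⟩ hYfg
  -- full faithfulness, left side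
  have hffL : HffL19 R Sᵐᵒᵖ U := by
    intro X X' _ _ _ _ hXu hXfg hX'u hX'fg
    let x : FGMod R := ⟨⟨X, hXu⟩, hXfg⟩
    let x' : FGMod R := ⟨⟨X', hX'u⟩, hX'fg⟩
    have key : ∀ h : LinMap R X' X,
        dlmLin19 (B := Sᵐᵒᵖ) (U := U) h =
          (F.map (X := Opposite.op x) (Y := Opposite.op x')
            (Quiver.Hom.op (CategoryTheory.ObjectProperty.homMk h : x' ⟶ x))).hom :=
      fun h => LinMap.ext (funext fun α => Subtype.ext (LinMap.ext rfl))
    constructor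
    · intro h1 h2 h12
      have h12' : dlmLin19 (B := Sᵐᵒᵖ) (U := U) h1 = dlmLin19 (B := Sᵐᵒᵖ) (U := U) h2 := h12
      rw [key h1, key h2] at h12'
      have := F.map_injective (CategoryTheory.InducedCategory.hom_ext h12')
      exact congrArg (fun g => g.unop.hom) this
    · intro u
      obtain ⟨f, hf⟩ := F.map_surjective
        (X := Opposite.op x) (Y := Opposite.op x')
        (CategoryTheory.ObjectProperty.homMk u : F.obj (Opposite.op x) ⟶ F.obj (Opposite.op x'))
      refine ⟨f.unop.hom, ?_⟩
      show dlmLin19 (B := Sᵐᵒᵖ) (U := U) f.unop.hom = u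
      rw [key f.unop.hom]
      exact congrArg CategoryTheory.InducedCategory.Hom.hom hf
  -- full faithfulness, right side
  have hffR : HffL19 Sᵐᵒᵖ R U := by
    intro Y Y' _ _ _ _ hYu hYfg hY'u hY'fg
    let y : FGMod Sᵐᵒᵖ := ⟨⟨Y, hYu⟩, hYfg⟩
    let y' : FGMod Sᵐᵒᵖ := ⟨⟨Y', hY'u⟩, hY'fg⟩
    have key : ∀ h : LinMap Sᵐᵒᵖ Y' Y,
        dlmLin19 (B := R) (U := U) h =
          (G.map (X := y') (Y := y) (CategoryTheory.ObjectProperty.homMk h : y' ⟶ y)).unop.hom :=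
      fun h => LinMap.ext (funext fun α => Subtype.ext (LinMap.ext rfl))
    constructor
    · intro h1 h2 h12
      have h12' : dlmLin19 (B := R) (U := U) h1 = dlmLin19 (B := R) (U := U) h2 := h12
      rw [key h1, key h2] at h12'
      exact congrArg CategoryTheory.InducedCategory.Hom.hom
        (G.map_injective (Quiver.Hom.unop_inj (CategoryTheory.InducedCategory.hom_ext h12')))
    · intro u
      obtain ⟨f, hf⟩ := G.map_surjective (X := y') (Y := y)
        (Quiver.Hom.op (CategoryTheory.ObjectProperty.homMk u : (G.obj y).unop ⟶ (G.obj y').unop))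
      refine ⟨f.hom, ?_⟩
      show dlmLin19 (B := R) (U := U) f.hom = u
      rw [key f.hom]
      exact congrArg (fun g => g.unop.hom) hf
  exact ⟨master19 (B := Sᵐᵒᵖ) hfgL hfgR hffL, master19 (B := R) hfgR hfgL hffR⟩
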